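/- Let A, B ∈ T(l×m×n, ℂ) be non-degenerate 3-way arrays with frontal slices A_1, …, A_n and B_1, …, B_n. Define r(A) ∈ T((l+m)×(l+m)×n, ℂ) by letting its i-th frontal slice be the (l+m)×(l+m) block matrix with block (1,2) (of size l×m) equal to A_i and all other blocks zero, and define r(B) analogously. Then there exist unitary matrices P ∈ U(l, ℂ), Q ∈ U(m, ℂ), R ∈ U(n, ℂ) with P A Q = B^R if and only if there exist unitary matrices S ∈ U(l+m, ℂ) and T ∈ U(n, ℂ) with S^{-1} r(A) S = r(B)^T. -/
import Mathlib


open Matrix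

/-- A 3-way array (given by its tuple of frontal slices) is non-degenerate if its
horizontal, lateral and frontal slices are each linearly independent families. -/
def Nondegenerate₃ {l m n : ℕ} (A : Fin n → Matrix (Fin l) (Fin m) ℂ) : Prop :=
  LinearIndependent ℂ (fun i : Fin l => fun (j : Fin m) (k : Fin n) => A k i j) ∧
  LinearIndependent ℂ (fun j : Fin m => fun (i : Fin l) (k : Fin n) => A k i j) ∧
  LinearIndependent ℂ A

/-- The padding `r(A) ∈ T((l+m)×(l+m)×n, ℂ)` whose `i`-th frontal slice has block `(1,2)`
(of size `l×m`) equal to `Aᵢ` and all other blocks zero. -/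
noncomputable def padUp {l m n : ℕ} (A : Fin n → Matrix (Fin l) (Fin m) ℂ) :
    Fin n → Matrix (Fin (l + m)) (Fin (l + m)) ℂ :=
  fun i => Matrix.of fun p q =>
    if h : (p : ℕ) < l ∧ l ≤ (q : ℕ) then
      A i ⟨p, h.1⟩ ⟨(q : ℕ) - l, by have := q.isLt; omega⟩
    else 0

/-- The reindexing algebra equivalence from the `Fin l ⊕ Fin m` world to `Fin (l+m)`. -/
noncomputable def Phi (l m : ℕ) :
    Matrix (Fin l ⊕ Fin m) (Fin l ⊕ Fin m) ℂ ≃ₐ[ℂ] Matrix (Fin (l + m)) (Fin (l + m)) ℂ :=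
  Matrix.reindexAlgEquiv ℂ ℂ finSumFinEquiv

lemma finSumFinEquiv_symm_dite {l m : ℕ} (p : Fin (l + m)) :
    (finSumFinEquiv (m := l) (n := m)).symm p =
      if h : (p : ℕ) < l then Sum.inl ⟨p, h⟩ else Sum.inr ⟨(p : ℕ) - l, by omega⟩ := by
  rw [Equiv.symm_apply_eq]
  split
  · apply Fin.ext; simp [Fin.castAdd, Fin.castLE]
  · apply Fin.ext; simp; omega

lemma Phi_star {l m : ℕ} (M : Matrix (Fin l ⊕ Fin m) (Fin l ⊕ Fin m) ℂ) :
    star (Phi l m M) = Phi l m (star M) := by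
  simp only [Phi, Matrix.reindexAlgEquiv_apply, star_eq_conjTranspose,
    Matrix.conjTranspose_reindex]

lemma padUp_eq {l m n : ℕ} (A : Fin n → Matrix (Fin l) (Fin m) ℂ) (k : Fin n) :
    padUp A k = Phi l m (Matrix.fromBlocks 0 (A k) 0 0) := by
  ext p q
  simp only [padUp, Matrix.of_apply, Phi, Matrix.reindexAlgEquiv_apply, Matrix.reindex_apply,
    Matrix.submatrix_apply, finSumFinEquiv_symm_dite]
  by_cases hp : (p : ℕ) < l <;> by_cases hq : (q : ℕ) < l <;>
    simp [hp, hq, Matrix.fromBlocks] <;> (try rw [dif_pos (by omega)])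

lemma sum_smul_padUp {l m n : ℕ} (B : Fin n → Matrix (Fin l) (Fin m) ℂ)
    (c : Fin n → ℂ) :
    ∑ k' : Fin n, c k' • padUp B k' =
      Phi l m (Matrix.fromBlocks 0 (∑ k' : Fin n, c k' • B k') 0 0) := by
  have h1 : (Matrix.fromBlocks 0 (∑ k' : Fin n, c k' • B k') 0 0 :
      Matrix (Fin l ⊕ Fin m) (Fin l ⊕ Fin m) ℂ)
      = ∑ k' : Fin n, c k' • Matrix.fromBlocks 0 (B k') 0 0 := by
    ext (i | i) (j | j) <;>
      simp [Matrix.fromBlocks, Matrix.sum_apply]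
  rw [h1, map_sum]
  simp only [padUp_eq, _root_.map_smul]

theorem stmt_8 (l m n : ℕ) (A B : Fin n → Matrix (Fin l) (Fin m) ℂ)
    (hA : Nondegenerate₃ A) (hB : Nondegenerate₃ B) :
    (∃ P ∈ Matrix.unitaryGroup (Fin l) ℂ, ∃ Q ∈ Matrix.unitaryGroup (Fin m) ℂ,
        ∃ R ∈ Matrix.unitaryGroup (Fin n) ℂ,
        ∀ k : Fin n, P * A k * Q = ∑ k' : Fin n, R k' k • B k')
      ↔ (∃ S ∈ Matrix.unitaryGroup (Fin (l + m)) ℂ, ∃ T ∈ Matrix.unitaryGroup (Fin n) ℂ,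
          ∀ k : Fin n, S⁻¹ * padUp A k * S = ∑ k' : Fin n, T k' k • padUp B k') := by
  constructor
  · rintro ⟨P, hP, Q, hQ, R, hR, hPQ⟩
    have hPP : P * Pᴴ = 1 := by
      rw [← star_eq_conjTranspose]; exact Matrix.mem_unitaryGroup_iff.mp hP
    have hQQ : Qᴴ * Q = 1 := by
      rw [← star_eq_conjTranspose]; exact Matrix.mem_unitaryGroup_iff'.mp hQ
    set M : Matrix (Fin l ⊕ Fin m) (Fin l ⊕ Fin m) ℂ := Matrix.fromBlocks Pᴴ 0 0 Q with hM
    set S := Phi l m M with hSdef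
    have hstarM : star M * M = 1 := by
      rw [hM, star_eq_conjTranspose, Matrix.fromBlocks_conjTranspose, Matrix.fromBlocks_multiply]
      simp only [Matrix.conjTranspose_zero, Matrix.mul_zero, Matrix.zero_mul, add_zero, zero_add,
        Matrix.conjTranspose_conjTranspose]
      rw [hPP, hQQ, Matrix.fromBlocks_one]
    have hSmem : S ∈ Matrix.unitaryGroup (Fin (l + m)) ℂ := by
      rw [Matrix.mem_unitaryGroup_iff']
      rw [hSdef, Phi_star, ← _root_.map_mul, hstarM, _root_.map_one]
    refine ⟨S, hSmem, R, hR, fun k => ?_⟩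
    have hSinv : S⁻¹ = star S := by
      apply Matrix.inv_eq_left_inv
      rw [hSdef, Phi_star, ← _root_.map_mul, hstarM, _root_.map_one]
    rw [hSinv, hSdef, Phi_star, padUp_eq, ← _root_.map_mul, ← _root_.map_mul, sum_smul_padUp]
    congr 1
    rw [hM, star_eq_conjTranspose, Matrix.fromBlocks_conjTranspose]
    simp only [Matrix.conjTranspose_zero, Matrix.conjTranspose_conjTranspose]
    rw [Matrix.fromBlocks_multiply, Matrix.fromBlocks_multiply]
    simp only [Matrix.mul_zero, Matrix.zero_mul, add_zero, zero_add]
    rw [hPQ k]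
  · rintro ⟨S, hS, T, hT, h⟩
    have hS1 : S * star S = 1 := Matrix.mem_unitaryGroup_iff.mp hS
    have hS2 : star S * S = 1 := Matrix.mem_unitaryGroup_iff'.mp hS
    have hSinv : S⁻¹ = star S := Matrix.inv_eq_right_inv hS1
    set M : Matrix (Fin l ⊕ Fin m) (Fin l ⊕ Fin m) ℂ := (Phi l m).symm S with hMdef
    have hSM : S = Phi l m M := by rw [hMdef, AlgEquiv.apply_symm_apply]
    have hblock : ∀ k : Fin n,
        Matrix.fromBlocks 0 (A k) 0 0 * M =
          M * Matrix.fromBlocks 0 (∑ k' : Fin n, T k' k • B k') 0 0 := by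
      intro k
      apply (Phi l m).injective
      rw [_root_.map_mul, _root_.map_mul, ← hSM, ← padUp_eq, ← sum_smul_padUp]
      have hk := h k
      rw [hSinv] at hk
      calc padUp A k * S = S * (star S * padUp A k * S) := by
            rw [← Matrix.mul_assoc, ← Matrix.mul_assoc, hS1, Matrix.one_mul]
        _ = S * ∑ k' : Fin n, T k' k • padUp B k' := by rw [hk]
    set S11 := M.toBlocks₁₁ with h11
    set S12 := M.toBlocks₁₂ with h12
    set S21 := M.toBlocks₂₁ with h21
    set S22 := M.toBlocks₂₂ with h22
    have hMb : M = Matrix.fromBlocks S11 S12 S21 S22 := (Matrix.fromBlocks_toBlocks M).symm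
    have hblock' : ∀ k : Fin n,
        A k * S21 = 0 ∧ A k * S22 = S11 * ∑ k' : Fin n, T k' k • B k' := by
      intro k
      have hb := hblock k
      rw [hMb, Matrix.fromBlocks_multiply, Matrix.fromBlocks_multiply] at hb
      simp only [Matrix.mul_zero, Matrix.zero_mul, add_zero, zero_add] at hb
      rw [Matrix.fromBlocks_inj] at hb
      exact ⟨hb.1, hb.2.1⟩
    have hS21 : S21 = 0 := by
      ext j c
      have hli := Fintype.linearIndependent_iff.mp hA.2.1 (fun j => S21 j c) ?_ j
      · simpa using hli
      · funext i k
        have he : (A k * S21) i c = (0 : Matrix (Fin l) (Fin l) ℂ) i c := by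
          rw [(hblock' k).1]
        simp only [Matrix.mul_apply, Matrix.zero_apply] at he
        simp only [Finset.sum_apply, Pi.smul_apply, smul_eq_mul, Pi.zero_apply]
        rw [← he]
        exact Finset.sum_congr rfl fun j' _ => mul_comm _ _
    have hMu : star M * M = 1 := by
      apply (Phi l m).injective
      rw [_root_.map_mul, _root_.map_one, ← Phi_star, ← hSM, hS2]
    rw [hMb, hS21, star_eq_conjTranspose, Matrix.fromBlocks_conjTranspose,
      Matrix.fromBlocks_multiply, ← Matrix.fromBlocks_one (l := Fin l) (m := Fin m)] at hMu
    simp only [Matrix.conjTranspose_zero, Matrix.mul_zero, Matrix.zero_mul, add_zero,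
      zero_add] at hMu
    rw [Matrix.fromBlocks_inj] at hMu
    obtain ⟨u1, u2, -, u4⟩ := hMu
    have hS11mem : S11 ∈ Matrix.unitaryGroup (Fin l) ℂ :=
      Matrix.mem_unitaryGroup_iff'.mpr (by rw [star_eq_conjTranspose]; exact u1)
    have hS11' : S11 * S11ᴴ = 1 := mul_eq_one_comm.mp u1
    have hS12 : S12 = 0 := by
      calc S12 = (S11 * S11ᴴ) * S12 := by rw [hS11', Matrix.one_mul]
        _ = S11 * (S11ᴴ * S12) := by rw [Matrix.mul_assoc]
        _ = 0 := by rw [u2, Matrix.mul_zero]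
    have u4' : S22ᴴ * S22 = 1 := by
      rw [hS12] at u4; simpa using u4
    refine ⟨star S11, Unitary.star_mem hS11mem, S22, Matrix.mem_unitaryGroup_iff'.mpr
      (by rw [star_eq_conjTranspose]; exact u4'), T, hT, fun k => ?_⟩
    rw [star_eq_conjTranspose, Matrix.mul_assoc, (hblock' k).2, ← Matrix.mul_assoc, u1,
      Matrix.one_mul]
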